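/- arXiv:1608.06014 — 2 statements merged into one kernel-verified Lean document; each statement's English description precedes it below -/
import Mathlib

section
/- There exists a function g : 𝒩 → ℝ such that for every b ∈ ℝ^n with ‖b‖ = 1, μ̄(b) = g(proj_𝒩(b)); that is, on the unit sphere, μ̄ is determined by the orthogonal projection onto 𝒩. -/
open RealInnerProductSpace Set

/-! Two vectors `b`, `c` of the same norm are exchanged by the reflection in the hyperplane
`(b - c)ᗮ`. If `b` and `c` have the same projection onto `𝒩`, then `b - c ⊥ 𝒩`, so this
reflection fixes every `n_k` and hence maps the intersection of the domes onto itself; being an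
isometry, it carries the values of `⟪·, b⟫` there onto those of `⟪·, c⟫`. -/

section Domes

variable {E ι : Type*} [NormedAddCommGroup E] [InnerProductSpace ℝ E]

def domes (nv : ι → E) (ψ : ι → ℝ) : Set E :=
  ⋂ k, {z : E | ‖z‖ ≤ 1 ∧ ⟪nv k, z⟫ + ψ k ≤ 0}

lemma mapsTo_domes (nv : ι → E) (ψ : ι → ℝ) (T : E →ₗᵢ[ℝ] E) (hT : ∀ k, T (nv k) = nv k) :
    MapsTo T (domes nv ψ) (domes nv ψ) := by
  intro z hz
  simp only [domes, mem_iInter, mem_ofPred_eq] at hz ⊢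
  intro k
  rw [T.norm_map, ← hT k, T.inner_map_map]
  exact hz k

lemma image_inner_subset_image_inner_map {C : Set E} (T : E →ₗᵢ[ℝ] E) (hC : MapsTo T C C)
    (v : E) : (fun z => ⟪z, v⟫) '' C ⊆ (fun z => ⟪z, T v⟫) '' C := by
  rintro _ ⟨z, hz, rfl⟩
  exact ⟨T z, hC hz, T.inner_map_map z v⟩

lemma inner_eq_of_orthogonalProjectionOnto_eq (K : Submodule ℝ E) [K.HasOrthogonalProjection]
    {u b c : E} (hu : u ∈ K) (h : K.orthogonalProjectionOnto b = K.orthogonalProjectionOnto c) :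
    ⟪u, b⟫ = ⟪u, c⟫ := by
  rw [← K.inner_orthogonalProjectionOnto_eq_of_mem_left ⟨u, hu⟩, h,
    K.inner_orthogonalProjectionOnto_eq_of_mem_left]

lemma image_inner_domes_eq_of_inner_eq (nv : ι → E) (ψ : ι → ℝ) {b c : E} (hnorm : ‖b‖ = ‖c‖)
    (hinner : ∀ k, ⟪nv k, b⟫ = ⟪nv k, c⟫) :
    (fun z => ⟪z, b⟫) '' domes nv ψ = (fun z => ⟪z, c⟫) '' domes nv ψ := by
  set R := (ℝ ∙ (b - c))ᗮ.reflection
  have hRb : R b = c := Submodule.reflection_sub hnorm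
  have hRc : R c = b := by rw [← hRb, Submodule.reflection_reflection]
  have hR : MapsTo R.toLinearIsometry (domes nv ψ) (domes nv ψ) := by
    refine mapsTo_domes nv ψ _ fun k => Submodule.reflection_mem_subspace_eq_self ?_
    rw [Submodule.mem_orthogonal_singleton_iff_inner_left, inner_sub_right, hinner k, sub_self]
  apply Subset.antisymm
  · simpa [hRb] using image_inner_subset_image_inner_map _ hR b
  · simpa [hRc] using image_inner_subset_image_inner_map _ hR c

end Domes

theorem stmt_13_general (n m : ℕ) (nv : Fin m → EuclideanSpace ℝ (Fin n))
    (ψ : Fin m → ℝ) :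
    ∃ g : (Submodule.span ℝ (Set.range nv)) → ℝ,
      ∀ b : EuclideanSpace ℝ (Fin n), ‖b‖ = 1 →
        sSup ((fun z => ⟪z, b⟫) ''
            ⋂ k, {z : EuclideanSpace ℝ (Fin n) | ‖z‖ ≤ 1 ∧ ⟪nv k, z⟫ + ψ k ≤ 0}) =
          g (Submodule.orthogonalProjection (Submodule.span ℝ (Set.range nv)) b) := by
  set N := Submodule.span ℝ (Set.range nv)
  let proj : Metric.sphere (0 : EuclideanSpace ℝ (Fin n)) 1 → N :=
    fun b => N.orthogonalProjectionOnto b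
  let μ : Metric.sphere (0 : EuclideanSpace ℝ (Fin n)) 1 → ℝ := fun b =>
    sSup ((fun z => ⟪z, (b : EuclideanSpace ℝ (Fin n))⟫) '' domes nv ψ)
  have hμ : μ.FactorsThrough proj := by
    intro b c hbc
    have hinner (k : Fin m) : ⟪nv k, (b : EuclideanSpace ℝ (Fin n))⟫ = ⟪nv k, c⟫ :=
      inner_eq_of_orthogonalProjectionOnto_eq N (Submodule.subset_span (mem_range_self k)) hbc
    have hnorm := (norm_eq_of_mem_sphere b).trans (norm_eq_of_mem_sphere c).symm
    exact congrArg sSup (image_inner_domes_eq_of_inner_eq nv ψ hnorm hinner)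
  exact ⟨Function.extend proj μ 0, fun b hb =>
    (hμ.extend_apply 0 ⟨b, mem_sphere_zero_iff_norm.mpr hb⟩).symm⟩

/-- There is a function `g : 𝒩 → ℝ` such that for every unit-norm `b`,
`μ̄(b) = g(proj_𝒩 b)`. -/
theorem stmt_13 (n m : ℕ) (nv : Fin m → EuclideanSpace ℝ (Fin n))
    (hnv : ∀ k, ‖nv k‖ = 1) (ψ : Fin m → ℝ) :
    ∃ g : (Submodule.span ℝ (Set.range nv)) → ℝ,
      ∀ b : EuclideanSpace ℝ (Fin n), ‖b‖ = 1 →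
        sSup ((fun z => ⟪z, b⟫) ''
            ⋂ k, {z : EuclideanSpace ℝ (Fin n) | ‖z‖ ≤ 1 ∧ ⟪nv k, z⟫ + ψ k ≤ 0}) =
          g (Submodule.orthogonalProjection (Submodule.span ℝ (Set.range nv)) b) :=
  stmt_13_general n m nv ψ
end

section
/- Let v_1,…,v_m be vectors whose span is the subspace 𝒩 = span{n_1,…,n_m}. Then there exists a function h : ℝ^m → ℝ such that for every b ∈ ℝ^n with ‖b‖ = 1, μ̄(b) = h(⟪v_1, b⟫, ⟪v_2, b⟫, …, ⟪v_m, b⟫). -/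
/-!
Equal inner products with every `v j` mean that `b - b'` is orthogonal to `𝒩`. The reflection
in the hyperplane orthogonal to `b - b'` is then a linear isometry which swaps the unit vectors
`b` and `b'`, fixes every normal `n_k`, and hence maps the intersection of the domes onto itself.
So `z ↦ ⟪z, b⟫` and `z ↦ ⟪z, b'⟫` take the same values on it, and `μ̄(b)` only depends on the
inner products `⟪v j, b⟫`.
-/

open RealInnerProductSpace Submodule

variable {E : Type*} [NormedAddCommGroup E] [InnerProductSpace ℝ E]

def dome (a : E) (c : ℝ) : Set E := {z | ‖z‖ ≤ 1 ∧ ⟪a, z⟫ + c ≤ 0}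

lemma dome_preimage_linearIsometryEquiv (f : E ≃ₗᵢ[ℝ] E) {a : E} (ha : f a = a) (c : ℝ) :
    f ⁻¹' dome a c = dome a c := by
  ext z
  simp only [dome, Set.mem_preimage, Set.mem_ofPred_eq, LinearIsometryEquiv.norm_map]
  rw [← ha, LinearIsometryEquiv.inner_map_map, ha]

lemma image_inner_apply_eq_of_preimage_eq {S : Set E} (f : E ≃ₗᵢ[ℝ] E) (hS : f ⁻¹' S = S)
    (b : E) : (fun z => ⟪z, f b⟫) '' S = (fun z => ⟪z, b⟫) '' S := by
  conv_lhs => rw [← Set.image_preimage_eq S f.surjective, hS, Set.image_image]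
  simp only [LinearIsometryEquiv.inner_map_map]

lemma exists_linearIsometryEquiv_apply_eq_of_inner_eq {s : Set E} {b b' : E}
    (hnorm : ‖b‖ = ‖b'‖) (hs : ∀ w ∈ s, ⟪w, b⟫ = ⟪w, b'⟫) :
    ∃ f : E ≃ₗᵢ[ℝ] E, f b = b' ∧ ∀ w ∈ span ℝ s, f w = w := by
  have hle : span ℝ s ≤ (ℝ ∙ (b - b'))ᗮ := span_le.mpr fun w hw =>
    mem_orthogonal_singleton_iff_inner_left.mpr (by rw [inner_sub_right, hs w hw, sub_self])
  exact ⟨reflection (ℝ ∙ (b - b'))ᗮ, reflection_sub hnorm,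
    fun w hw => reflection_mem_subspace_eq_self (hle hw)⟩

theorem stmt_14_general (n m : ℕ) (nv : Fin m → EuclideanSpace ℝ (Fin n))
    (ψ : Fin m → ℝ)
    (v : Fin m → EuclideanSpace ℝ (Fin n))
    (hspan : Submodule.span ℝ (Set.range v) = Submodule.span ℝ (Set.range nv)) :
    ∃ h : (Fin m → ℝ) → ℝ,
      ∀ b : EuclideanSpace ℝ (Fin n), ‖b‖ = 1 →
        sSup ((fun z => ⟪z, b⟫) ''
            ⋂ k, {z : EuclideanSpace ℝ (Fin n) | ‖z‖ ≤ 1 ∧ ⟪nv k, z⟫ + ψ k ≤ 0}) =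
          h (fun j => ⟪v j, b⟫) := by
  set S := ⋂ k, dome (nv k) (ψ k)
  let coords : Metric.sphere (0 : EuclideanSpace ℝ (Fin n)) 1 → Fin m → ℝ :=
    fun b j => ⟪v j, b⟫
  let μ : Metric.sphere (0 : EuclideanSpace ℝ (Fin n)) 1 → ℝ :=
    fun b => sSup ((fun z => ⟪z, (b : EuclideanSpace ℝ (Fin n))⟫) '' S)
  have hμ : μ.FactorsThrough coords := by
    rintro ⟨b, hb⟩ ⟨b', hb'⟩ hcoords
    obtain ⟨f, hfb, hfix⟩ := exists_linearIsometryEquiv_apply_eq_of_inner_eq (s := Set.range v)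
      (b := b) (b' := b') (by rw [mem_sphere_zero_iff_norm.mp hb, mem_sphere_zero_iff_norm.mp hb'])
      (by rintro _ ⟨j, rfl⟩; exact congrFun hcoords j)
    have hS : f ⁻¹' S = S := by
      simp only [S, Set.preimage_iInter]
      exact Set.iInter_congr fun k => dome_preimage_linearIsometryEquiv f
        (hfix _ (hspan ▸ subset_span ⟨k, rfl⟩)) (ψ k)
    subst hfb
    exact congrArg sSup (image_inner_apply_eq_of_preimage_eq f hS b).symm
  refine ⟨Function.extend coords μ 0, fun b hb => ?_⟩
  exact (hμ.extend_apply 0 ⟨b, mem_sphere_zero_iff_norm.mpr hb⟩).symm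

/-- If `span{v_1,…,v_m} = 𝒩`, then there is `h : ℝ^m → ℝ` such that for every
unit-norm `b`, `μ̄(b) = h(⟪v_1, b⟫, …, ⟪v_m, b⟫)`. -/
theorem stmt_14 (n m : ℕ) (nv : Fin m → EuclideanSpace ℝ (Fin n))
    (hnv : ∀ k, ‖nv k‖ = 1) (ψ : Fin m → ℝ)
    (v : Fin m → EuclideanSpace ℝ (Fin n))
    (hspan : Submodule.span ℝ (Set.range v) = Submodule.span ℝ (Set.range nv)) :
    ∃ h : (Fin m → ℝ) → ℝ,
      ∀ b : EuclideanSpace ℝ (Fin n), ‖b‖ = 1 →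
        sSup ((fun z => ⟪z, b⟫) ''
            ⋂ k, {z : EuclideanSpace ℝ (Fin n) | ‖z‖ ≤ 1 ∧ ⟪nv k, z⟫ + ψ k ≤ 0}) =
          h (fun j => ⟪v j, b⟫) :=
  stmt_14_general n m nv ψ v hspan
end
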